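/- Fix constants 0 < m ≤ M and a ∈ [m, M]. The function F_a : [0, M] → ℝ defined by F_a(x) = a·ln(2a/(a+x)) + x·ln(2x/(a+x)) (with the convention 0·ln 0 = 0) is twice differentiable on (0, M] with F_a''(x) = a/(x(a+x)), and F_a''(x) ≥ m/(2M²) for all x ∈ (0, M]; hence F_a is β-strongly convex on [0, M] with β = m/(2M²), uniformly in a ∈ [m, M]. -/

import Mathlib

open Real

/-- The integrand of the Jensen-Shannon divergence:
`F_a(x) = a ln(2a/(a+x)) + x ln(2x/(a+x))` (with the convention `0 ln 0 = 0`,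
which is automatic since `Real.log 0 = 0`). -/
noncomputable def Ffun (a : ℝ) (x : ℝ) : ℝ :=
  a * Real.log (2 * a / (a + x)) + x * Real.log (2 * x / (a + x))

noncomputable def Fexp (a : ℝ) (x : ℝ) : ℝ :=
  (a + x) * Real.log 2 + a * Real.log a + x * Real.log x - (a + x) * Real.log (a + x)

lemma Ffun_eq_Fexp {a x : ℝ} (ha : 0 < a) (hx : 0 ≤ x) : Ffun a x = Fexp a x := by
  rcases eq_or_lt_of_le hx with h | h
  · subst h
    unfold Ffun Fexp
    simp only [add_zero, zero_mul, mul_zero, Real.log_zero]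
    rw [mul_div_assoc, div_self ha.ne', mul_one]
    ring
  · have hax : 0 < a + x := by linarith
    unfold Ffun Fexp
    rw [Real.log_div (by positivity) hax.ne', Real.log_div (by positivity) hax.ne',
      Real.log_mul two_ne_zero ha.ne', Real.log_mul two_ne_zero h.ne']
    ring

lemma hasDeriv1 {a x : ℝ} (ha : 0 < a) (hx : 0 < x) :
    HasDerivAt (Ffun a) (Real.log 2 + Real.log x - Real.log (a + x)) x := by
  have hax : 0 < a + x := by linarith
  have hE : HasDerivAt (Fexp a) (Real.log 2 + Real.log x - Real.log (a + x)) x := by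
    have h1 : HasDerivAt (fun y : ℝ => (a + y) * Real.log 2) (Real.log 2) x := by
      simpa using (((hasDerivAt_id x).const_add a).mul_const (Real.log 2))
    have h2 : HasDerivAt (fun y : ℝ => y * Real.log y) (Real.log x + 1) x :=
      Real.hasDerivAt_mul_log hx.ne'
    have h3 : HasDerivAt (fun y : ℝ => (a + y) * Real.log (a + y))
        ((Real.log (a + x) + 1) * 1) x :=
      (Real.hasDerivAt_mul_log hax.ne').comp x ((hasDerivAt_id x).const_add a)
    have := ((h1.add_const (a * Real.log a)).add h2).sub h3
    exact this.congr_deriv (by ring)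
  have hev : Ffun a =ᶠ[nhds x] Fexp a := by
    filter_upwards [eventually_gt_nhds hx] with y hy
    exact Ffun_eq_Fexp ha hy.le
  exact hE.congr_of_eventuallyEq hev

lemma derivF {a x : ℝ} (ha : 0 < a) (hx : 0 < x) :
    deriv (Ffun a) x = Real.log 2 + Real.log x - Real.log (a + x) :=
  (hasDeriv1 ha hx).deriv

lemma hasDeriv2 {a x : ℝ} (ha : 0 < a) (hx : 0 < x) :
    HasDerivAt (deriv (Ffun a)) (a / (x * (a + x))) x := by
  have hax : 0 < a + x := by linarith
  have hE : HasDerivAt (fun y : ℝ => Real.log 2 + Real.log y - Real.log (a + y))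
      (1 / x - 1 / (a + x)) x := by
    have h2 : HasDerivAt (fun y : ℝ => Real.log y) x⁻¹ x := Real.hasDerivAt_log hx.ne'
    have h3 : HasDerivAt (fun y : ℝ => Real.log (a + y)) ((a + x)⁻¹ * 1) x :=
      (Real.hasDerivAt_log hax.ne').comp x ((hasDerivAt_id x).const_add a)
    have := (h2.const_add (Real.log 2)).sub h3
    exact this.congr_deriv (by ring)
  have hev : deriv (Ffun a) =ᶠ[nhds x] fun y => Real.log 2 + Real.log y - Real.log (a + y) := by
    filter_upwards [eventually_gt_nhds hx] with y hy
    exact derivF ha hy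
  have := hE.congr_of_eventuallyEq hev
  exact this.congr_deriv (by field_simp; ring)

lemma hasDerivH {β a x : ℝ} (ha : 0 < a) (hx : 0 < x) :
    HasDerivAt (fun y => Ffun a y - β / 2 * y ^ 2)
      (Real.log 2 + Real.log x - Real.log (a + x) - β * x) x := by
  have h2 : HasDerivAt (fun y : ℝ => β / 2 * y ^ 2) (β / 2 * (2 * x)) x := by
    simpa using (hasDerivAt_pow 2 x).const_mul (β / 2)
  have := (hasDeriv1 ha hx).sub h2
  exact this.congr_deriv (by ring)

lemma derivH {β a x : ℝ} (ha : 0 < a) (hx : 0 < x) :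
    deriv (fun y => Ffun a y - β / 2 * y ^ 2) x =
      Real.log 2 + Real.log x - Real.log (a + x) - β * x :=
  (hasDerivH ha hx).deriv

lemma hasDerivH2 {β a x : ℝ} (ha : 0 < a) (hx : 0 < x) :
    HasDerivAt (deriv (fun y => Ffun a y - β / 2 * y ^ 2)) (a / (x * (a + x)) - β) x := by
  have hax : 0 < a + x := by linarith
  have hE : HasDerivAt (fun y : ℝ => Real.log 2 + Real.log y - Real.log (a + y) - β * y)
      (1 / x - 1 / (a + x) - β) x := by
    have h2 : HasDerivAt (fun y : ℝ => Real.log y) x⁻¹ x := Real.hasDerivAt_log hx.ne'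
    have h3 : HasDerivAt (fun y : ℝ => Real.log (a + y)) ((a + x)⁻¹ * 1) x :=
      (Real.hasDerivAt_log hax.ne').comp x ((hasDerivAt_id x).const_add a)
    have h4 : HasDerivAt (fun y : ℝ => β * y) β x := by
      simpa using (hasDerivAt_id x).const_mul β
    have := ((h2.const_add (Real.log 2)).sub h3).sub h4
    exact this.congr_deriv (by ring)
  have hev : deriv (fun y => Ffun a y - β / 2 * y ^ 2) =ᶠ[nhds x]
      fun y => Real.log 2 + Real.log y - Real.log (a + y) - β * y := by
    filter_upwards [eventually_gt_nhds hx] with y hy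
    exact derivH ha hy
  have := hE.congr_of_eventuallyEq hev
  exact this.congr_deriv (by field_simp; ring)

lemma bound_aux {m M a x : ℝ} (hm : 0 < m) (hma : m ≤ a) (haM : a ≤ M) (hx : 0 < x)
    (hxM : x ≤ M) : m / (2 * M ^ 2) ≤ a / (x * (a + x)) := by
  have hM : 0 < M := lt_of_lt_of_le hm (hma.trans haM)
  have ha0 : 0 < a := lt_of_lt_of_le hm hma
  have hax : 0 < a + x := by linarith
  rw [div_le_div_iff₀ (by positivity) (mul_pos hx hax)]
  have h1 : x * (a + x) ≤ 2 * M ^ 2 := by nlinarith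
  exact mul_le_mul hma h1 (mul_pos hx hax).le ha0.le

/-- For `0 < m ≤ M` and `a ∈ [m,M]`, the function `F_a` is twice differentiable on `(0,M]`
with `F_a''(x) = a/(x(a+x)) ≥ m/(2M²)`, and `F_a` is `β`-strongly convex on `[0,M]`
with `β = m/(2M²)`, uniformly in `a`. -/
theorem stmt7 (m M a : ℝ) (hm : 0 < m) (hmM : m ≤ M) (ha : a ∈ Set.Icc m M) :
    (∀ x ∈ Set.Ioc (0 : ℝ) M,
      DifferentiableAt ℝ (Ffun a) x ∧
      DifferentiableAt ℝ (deriv (Ffun a)) x ∧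
      deriv (deriv (Ffun a)) x = a / (x * (a + x)) ∧
      m / (2 * M ^ 2) ≤ a / (x * (a + x))) ∧
    (∀ l ∈ Set.Icc (0 : ℝ) 1, ∀ x₁ ∈ Set.Icc (0 : ℝ) M, ∀ x₂ ∈ Set.Icc (0 : ℝ) M,
      Ffun a (l * x₁ + (1 - l) * x₂) ≤
        l * Ffun a x₁ + (1 - l) * Ffun a x₂ -
          (m / (2 * M ^ 2)) / 2 * l * (1 - l) * (x₁ - x₂) ^ 2) := by
  obtain ⟨hma, haM⟩ := ha
  have ha0 : 0 < a := lt_of_lt_of_le hm hma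
  have hM : 0 < M := lt_of_lt_of_le hm hmM
  set β := m / (2 * M ^ 2) with hβ
  constructor
  · rintro x ⟨hx0, hxM⟩
    exact ⟨(hasDeriv1 ha0 hx0).differentiableAt, (hasDeriv2 ha0 hx0).differentiableAt,
      (hasDeriv2 ha0 hx0).deriv, bound_aux hm hma haM hx0 hxM⟩
  · have hconv : ConvexOn ℝ (Set.Icc (0 : ℝ) M) (fun y => Ffun a y - β / 2 * y ^ 2) := by
      apply convexOn_of_deriv2_nonneg (convex_Icc 0 M)
      · have cF : Continuous (fun y => Fexp a y - β / 2 * y ^ 2) := by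
          unfold Fexp
          exact ((((continuous_const.add continuous_id).mul continuous_const).add
            continuous_const).add Real.continuous_mul_log).sub
            (Real.continuous_mul_log.comp (continuous_const.add continuous_id)) |>.sub
            (by continuity)
        exact cF.continuousOn.congr fun y hy => by
          simp [Ffun_eq_Fexp ha0 hy.1]
      · rw [interior_Icc]
        rintro x ⟨hx0, hxM⟩
        exact (hasDerivH ha0 hx0).differentiableAt.differentiableWithinAt
      · rw [interior_Icc]
        rintro x ⟨hx0, hxM⟩
        exact (hasDerivH2 ha0 hx0).differentiableAt.differentiableWithinAt
      · rw [interior_Icc]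
        rintro x ⟨hx0, hxM⟩
        have : deriv^[2] (fun y => Ffun a y - β / 2 * y ^ 2) x = a / (x * (a + x)) - β := by
          show deriv (deriv _) x = _
          exact (hasDerivH2 ha0 hx0).deriv
        rw [this, sub_nonneg]
        exact bound_aux hm hma haM hx0 hxM.le
    rintro l ⟨hl0, hl1⟩ x₁ hx₁ x₂ hx₂
    have hcv := hconv.2 hx₁ hx₂ hl0 (show (0:ℝ) ≤ 1 - l by linarith) (show l + (1 - l) = 1 by ring)
    simp only [smul_eq_mul] at hcv
    nlinarith [hcv]
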